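/- arXiv:2411.05766 — 3 statements merged into one kernel-verified Lean document; each statement's English description precedes it below -/
import Mathlib

section
/- For real numbers β, γ not both zero and any real α with 0 < α < 1, it holds that 2(β² + γ²)^α ≥ (β + γ)^{2α} + (β - γ)^{2α}. -/
/-! Apply concavity of `t ↦ t ^ α` on `[0, ∞)` to `(β + γ)²` and `(β - γ)²`, whose mean is
`β² + γ²`. -/

open Real

lemma Real.rpow_add_rpow_le_two_mul_rpow_half_add {x y p : ℝ} (hx : 0 ≤ x) (hy : 0 ≤ y)
    (hp0 : 0 ≤ p) (hp1 : p ≤ 1) :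
    x ^ p + y ^ p ≤ 2 * ((x + y) / 2) ^ p := by
  have h := (concaveOn_rpow hp0 hp1).2 (Set.mem_Ici.2 hx) (Set.mem_Ici.2 hy)
    (by norm_num : (0 : ℝ) ≤ 1 / 2) (by norm_num : (0 : ℝ) ≤ 1 / 2) (by norm_num)
  simp only [smul_eq_mul] at h
  rw [show 1 / 2 * x + 1 / 2 * y = (x + y) / 2 by ring] at h
  linarith

lemma Real.abs_rpow_two_mul (u p : ℝ) : |u| ^ (2 * p) = (u ^ 2) ^ p := by
  rw [rpow_mul (abs_nonneg u), rpow_two, sq_abs]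

theorem stmt_2_general (β γ α : ℝ) (hα0 : 0 < α) (hα1 : α < 1) :
    |β + γ| ^ (2 * α) + |β - γ| ^ (2 * α) ≤ 2 * (β ^ 2 + γ ^ 2) ^ α := by
  have h := rpow_add_rpow_le_two_mul_rpow_half_add (sq_nonneg (β + γ)) (sq_nonneg (β - γ))
    hα0.le hα1.le
  rwa [show ((β + γ) ^ 2 + (β - γ) ^ 2) / 2 = β ^ 2 + γ ^ 2 by ring, ← abs_rpow_two_mul,
    ← abs_rpow_two_mul] at h

/-- For real numbers `β, γ` not both zero and any real `0 < α < 1`,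
`2(β² + γ²)^α ≥ |β + γ|^(2α) + |β - γ|^(2α)`. -/
theorem stmt_2 (β γ α : ℝ) (hβγ : ¬(β = 0 ∧ γ = 0)) (hα0 : 0 < α) (hα1 : α < 1) :
    |β + γ| ^ (2 * α) + |β - γ| ^ (2 * α) ≤ 2 * (β ^ 2 + γ ^ 2) ^ α :=
  stmt_2_general β γ α hα0 hα1
end

section
/- Let ρ be a 2^N × 2^N density matrix, Q a Hermitian unitary with Q² = I commuting with a Hermitian operator P, V_λ = (I + λQ)/2 for λ = ±1, p_λ = Tr(ρV_λ) with 0 < p_λ < 1, and ρ_λ = V_λ ρ V_λ / p_λ. Then Σ_λ p_λ (Tr(ρ_λ P))² − (Tr(ρP))² = (Tr(ρP)Tr(ρQ) − Tr(ρPQ))² / (1 − Tr(ρQ)²). -/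
open Matrix
open scoped ComplexOrder

/-!
Since `Q² = 1` and `PQ = QP`, sandwiching gives `V_± P V_± = (P ± PQ)/2`, so by cyclicity of the
trace `p_± Tr(ρ_± P) = (Tr(ρP) ± Tr(ρPQ))/2`, while `p_± = (1 ± Tr(ρQ))/2`. The identity is then
an equation between the real numbers `p_±`, `Tr(ρP)`, `Tr(ρPQ)`, in which `1 - Tr(ρQ)² = 4 p₊ p₋`.
-/

theorem one_add_mul_mul_one_add {R : Type*} [Ring R] {P Q : R} (hQ : Q * Q = 1)
    (hPQ : P * Q = Q * P) : (1 + Q) * P * (1 + Q) = 2 * (P + P * Q) := by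
  have hQPQ : Q * P * Q = P := by rw [← hPQ, mul_assoc, hQ, mul_one]
  calc (1 + Q) * P * (1 + Q) = P + Q * P + P * Q + Q * P * Q := by noncomm_ring
    _ = 2 * (P + P * Q) := by rw [hQPQ, ← hPQ]; noncomm_ring

section Projector

variable {K A : Type*} [Field K] [NeZero (2 : K)] [Ring A] [Algebra K A] {P Q : A}

theorem half_smul_one_add_mul_mul (hQ : Q * Q = 1) (hPQ : P * Q = Q * P) :
    ((2 : K)⁻¹ • (1 + Q)) * P * ((2 : K)⁻¹ • (1 + Q)) = (2 : K)⁻¹ • (P + P * Q) := by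
  rw [smul_mul_assoc, smul_mul_assoc, mul_smul_comm, smul_smul, one_add_mul_mul_one_add hQ hPQ,
    two_mul, ← two_smul K, smul_smul, mul_assoc, inv_mul_cancel₀ two_ne_zero, mul_one]

theorem half_smul_one_sub_mul_mul (hQ : Q * Q = 1) (hPQ : P * Q = Q * P) :
    ((2 : K)⁻¹ • (1 - Q)) * P * ((2 : K)⁻¹ • (1 - Q)) = (2 : K)⁻¹ • (P - P * Q) := by
  simpa [sub_eq_add_neg] using half_smul_one_add_mul_mul (K := K) (P := P) (Q := -Q)
    (by rwa [neg_mul_neg]) (by rw [mul_neg, neg_mul, hPQ])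

end Projector

theorem Matrix.trace_mul_mul_mul_eq_trace_mul {n R : Type*} [Fintype n] [CommRing R]
    (V ρ P : Matrix n n R) : (V * ρ * V * P).trace = (ρ * (V * P * V)).trace := by
  simp only [Matrix.mul_assoc]
  rw [trace_mul_comm]
  simp only [Matrix.mul_assoc]

theorem Matrix.mul_re_trace_inv_smul_mul {n : Type*} [Fintype n] {p : ℝ} (hp : p ≠ 0)
    (A P : Matrix n n ℂ) : p * (((p : ℂ)⁻¹ • A) * P).trace.re = (A * P).trace.re := by
  rw [smul_mul_assoc, trace_smul, smul_eq_mul, ← Complex.ofReal_inv, Complex.re_ofReal_mul,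
    ← mul_assoc, mul_inv_cancel₀ hp, one_mul]

theorem mul_sq_add_mul_sq_sub_sq {p m a b x y : ℝ} (hp : p ≠ 0) (hm : m ≠ 0) (hpm : p + m = 1)
    (hx : p * x = (a + b) / 2) (hy : m * y = (a - b) / 2) :
    p * x ^ 2 + m * y ^ 2 - a ^ 2 = (a * (p - m) - b) ^ 2 / (1 - (p - m) ^ 2) := by
  obtain rfl : m = 1 - p := by linarith
  have hx' : x = (a + b) / (2 * p) := by field_simp; linarith
  have hy' : y = (a - b) / (2 * (1 - p)) := by field_simp; linarith
  rw [hx', hy', show 1 - (p - (1 - p)) ^ 2 = 4 * p * (1 - p) by ring]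
  field_simp
  ring

theorem stmt_6_general {N : ℕ} (ρ Q P : Matrix (Fin (2 ^ N)) (Fin (2 ^ N)) ℂ)
    (htr : ρ.trace = 1)
    (hQ2 : Q * Q = 1)
    (hPQ : P * Q = Q * P)
    (Vp Vm : Matrix (Fin (2 ^ N)) (Fin (2 ^ N)) ℂ)
    (hVp : Vp = (2 : ℂ)⁻¹ • (1 + Q)) (hVm : Vm = (2 : ℂ)⁻¹ • (1 - Q))
    (pp pm : ℝ)
    (hpp : (pp : ℂ) = (ρ * Vp).trace) (hpm : (pm : ℂ) = (ρ * Vm).trace)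
    (hpp0 : 0 < pp) (hpm0 : 0 < pm)
    (ρp ρm : Matrix (Fin (2 ^ N)) (Fin (2 ^ N)) ℂ)
    (hρp : ρp = ((pp : ℂ))⁻¹ • (Vp * ρ * Vp)) (hρm : ρm = ((pm : ℂ))⁻¹ • (Vm * ρ * Vm)) :
    pp * ((ρp * P).trace.re) ^ 2 + pm * ((ρm * P).trace.re) ^ 2 - ((ρ * P).trace.re) ^ 2
      = ((ρ * P).trace.re * (ρ * Q).trace.re - (ρ * P * Q).trace.re) ^ 2
          / (1 - ((ρ * Q).trace.re) ^ 2) := by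
  have hsum : pp + pm = 1 := by
    have hV : Vp + Vm = 1 := by rw [hVp, hVm]; module
    have : (pp : ℂ) + pm = 1 := by rw [hpp, hpm, ← trace_add, ← mul_add, hV, mul_one, htr]
    exact_mod_cast this
  have hdiff : pp - pm = (ρ * Q).trace.re := by
    have hV : Vp - Vm = Q := by rw [hVp, hVm]; module
    have : (pp : ℂ) - pm = (ρ * Q).trace := by rw [hpp, hpm, ← trace_sub, ← mul_sub, hV]
    simpa using congrArg Complex.re this
  have hp : pp * (ρp * P).trace.re = ((ρ * P).trace.re + (ρ * P * Q).trace.re) / 2 := by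
    rw [hρp, mul_re_trace_inv_smul_mul hpp0.ne', trace_mul_mul_mul_eq_trace_mul, hVp,
      half_smul_one_add_mul_mul hQ2 hPQ, Matrix.mul_smul, trace_smul, smul_eq_mul,
      ← div_eq_inv_mul, Complex.div_ofNat_re, mul_add, trace_add, Complex.add_re,
      ← Matrix.mul_assoc]
  have hm : pm * (ρm * P).trace.re = ((ρ * P).trace.re - (ρ * P * Q).trace.re) / 2 := by
    rw [hρm, mul_re_trace_inv_smul_mul hpm0.ne', trace_mul_mul_mul_eq_trace_mul, hVm,
      half_smul_one_sub_mul_mul hQ2 hPQ, Matrix.mul_smul, trace_smul, smul_eq_mul,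
      ← div_eq_inv_mul, Complex.div_ofNat_re, mul_sub, trace_sub, Complex.sub_re,
      ← Matrix.mul_assoc]
  rw [← hdiff]
  exact mul_sq_add_mul_sq_sub_sq hpp0.ne' hpm0.ne' hsum hp hm

/-- With `ρ` a `2^N × 2^N` density matrix, `Q` a Hermitian unitary with `Q² = I`
commuting with the Hermitian operator `P`, `V_λ = (I + λQ)/2`, `p_λ = Tr(ρ V_λ)` with
`0 < p_λ < 1`, and `ρ_λ = V_λ ρ V_λ / p_λ`, one has
`Σ_λ p_λ (Tr(ρ_λ P))² − (Tr(ρP))² = (Tr(ρP)Tr(ρQ) − Tr(ρPQ))² / (1 − Tr(ρQ)²)`. -/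
theorem stmt_6 {N : ℕ} (ρ Q P : Matrix (Fin (2 ^ N)) (Fin (2 ^ N)) ℂ)
    (hρ : ρ.PosSemidef) (htr : ρ.trace = 1)
    (hQ : Q.IsHermitian) (hQ2 : Q * Q = 1)
    (hP : P.IsHermitian) (hPQ : P * Q = Q * P)
    (Vp Vm : Matrix (Fin (2 ^ N)) (Fin (2 ^ N)) ℂ)
    (hVp : Vp = (2 : ℂ)⁻¹ • (1 + Q)) (hVm : Vm = (2 : ℂ)⁻¹ • (1 - Q))
    (pp pm : ℝ)
    (hpp : (pp : ℂ) = (ρ * Vp).trace) (hpm : (pm : ℂ) = (ρ * Vm).trace)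
    (hpp0 : 0 < pp) (hpp1 : pp < 1) (hpm0 : 0 < pm) (hpm1 : pm < 1)
    (ρp ρm : Matrix (Fin (2 ^ N)) (Fin (2 ^ N)) ℂ)
    (hρp : ρp = ((pp : ℂ))⁻¹ • (Vp * ρ * Vp)) (hρm : ρm = ((pm : ℂ))⁻¹ • (Vm * ρ * Vm)) :
    pp * ((ρp * P).trace.re) ^ 2 + pm * ((ρm * P).trace.re) ^ 2 - ((ρ * P).trace.re) ^ 2
      = ((ρ * P).trace.re * (ρ * Q).trace.re - (ρ * P * Q).trace.re) ^ 2
          / (1 - ((ρ * Q).trace.re) ^ 2) :=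
  stmt_6_general ρ Q P htr hQ2 hPQ Vp Vm hVp hVm pp pm hpp hpm hpp0 hpm0 ρp ρm hρp hρm
end

section
/- Let M_n(ψ) = (1−n)^{-1} log( (1/2^N) Σ_{P} ⟨ψ|P|ψ⟩^{2n} ) be the stabilizer Rényi entropy (sum over the 4^N Pauli strings with phase +1). Then M_n is additive: M_n(ψ ⊗ φ) = M_n(ψ) + M_n(φ). -/
open Matrix

/-- The single-qubit Pauli matrices `I, X, Y, Z`. -/
def pauli1 : Fin 4 → Matrix (Fin 2) (Fin 2) ℂ
  | 0 => !![1, 0; 0, 1]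
  | 1 => !![0, 1; 1, 0]
  | 2 => !![0, -Complex.I; Complex.I, 0]
  | 3 => !![1, 0; 0, -1]

/-- Pure state vectors on `N` qubits. -/
abbrev nQVec (N : ℕ) := (Fin N → Fin 2) → ℂ

/-- The `N`-qubit Pauli string (with phase `+1`) labelled by `a : Fin N → Fin 4`:
the tensor product `⊗_j pauli1 (a j)`, written entrywise. -/
def PauliStr {N : ℕ} (a : Fin N → Fin 4) :
    Matrix (Fin N → Fin 2) (Fin N → Fin 2) ℂ :=
  Matrix.of fun x y => ∏ j, pauli1 (a j) (x j) (y j)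

/-- The stabilizer Rényi entropy
`M_n(ψ) = (1−n)⁻¹ log( (1/2^N) Σ_P ⟨ψ|P|ψ⟩^{2n} )`, the sum running over the `4^N`
Pauli strings with phase `+1`. -/
noncomputable def sre (n : ℝ) {N : ℕ} (ψ : nQVec N) : ℝ :=
  (1 - n)⁻¹ * Real.log ((1 / 2 ^ N : ℝ) *
    ∑ a : Fin N → Fin 4, ‖(star ψ) ⬝ᵥ ((PauliStr a).mulVec ψ)‖ ^ (2 * n))

/-- Tensor product of pure-state vectors. -/
def vKron {a b : ℕ} (ψ : nQVec a) (φ : nQVec b) : nQVec (a + b) :=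
  fun x => ψ (fun j => x (Fin.castAdd b j)) * φ (fun j => x (Fin.natAdd a j))

/-!
A Pauli string on `N₁ + N₂` qubits is, after splitting the qubits, the Kronecker product of a
string on the first `N₁` and one on the last `N₂` qubits, so its expectation value in `ψ ⊗ φ` is
the product of the two expectation values. Hence the normalised Pauli sum
`2⁻ᴺ ∑_P |⟨ψ|P|ψ⟩|^{2n}` is multiplicative under `⊗`, and its logarithm is additive as soon as
both factors are positive, which the identity string guarantees for nonzero states.
-/

open scoped Kronecker

theorem Matrix.dotProduct_kronecker_mulVec {l m n p R : Type*} [Fintype l] [Fintype m]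
    [Fintype n] [Fintype p] [CommSemiring R] (A : Matrix l m R) (B : Matrix n p R)
    (u₁ : l → R) (u₂ : n → R) (v₁ : m → R) (v₂ : p → R) :
    (fun i : l × n => u₁ i.1 * u₂ i.2) ⬝ᵥ (A ⊗ₖ B) *ᵥ (fun j : m × p => v₁ j.1 * v₂ j.2)
      = (u₁ ⬝ᵥ A *ᵥ v₁) * (u₂ ⬝ᵥ B *ᵥ v₂) := by
  simp only [dotProduct, mulVec, Fintype.sum_prod_type, kroneckerMap_apply]
  rw [Finset.sum_mul_sum]
  refine Finset.sum_congr rfl fun i₁ _ => Finset.sum_congr rfl fun i₂ _ => ?_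
  rw [mul_mul_mul_comm, Finset.sum_mul_sum]
  exact congrArg _ (Finset.sum_congr rfl fun j₁ _ => Finset.sum_congr rfl fun j₂ _ => by ring)

theorem Matrix.comp_equiv_dotProduct_submatrix_mulVec {m n R : Type*} [Fintype m] [Fintype n]
    [NonUnitalNonAssocSemiring R] (e : m ≃ n) (M : Matrix n n R) (u v : n → R) :
    u ∘ e ⬝ᵥ M.submatrix e e *ᵥ (v ∘ e) = u ⬝ᵥ M *ᵥ v := by
  rw [submatrix_mulVec_equiv, Function.comp_assoc, e.self_comp_symm, Function.comp_id,
    comp_equiv_dotProduct_comp_equiv]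

theorem pauli1_zero : pauli1 0 = 1 := by
  ext i j
  fin_cases i <;> fin_cases j <;> rfl

theorem pauliStr_zero {N : ℕ} : PauliStr (0 : Fin N → Fin 4) = 1 := by
  ext x y
  simp only [PauliStr, of_apply, Pi.zero_apply, pauli1_zero, one_apply, Finset.prod_ite_zero,
    Finset.prod_const_one, Finset.mem_univ, true_implies, funext_iff]

theorem pauliStr_append_submatrix {N₁ N₂ : ℕ} (a₁ : Fin N₁ → Fin 4) (a₂ : Fin N₂ → Fin 4) :
    (PauliStr (Fin.append a₁ a₂)).submatrix (Fin.appendEquiv N₁ N₂) (Fin.appendEquiv N₁ N₂)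
      = PauliStr a₁ ⊗ₖ PauliStr a₂ := by
  ext ⟨x₁, x₂⟩ ⟨y₁, y₂⟩
  simp [PauliStr, Fin.prod_univ_add]

theorem star_vKron {N₁ N₂ : ℕ} (ψ : nQVec N₁) (φ : nQVec N₂) :
    star (vKron ψ φ) = vKron (star ψ) (star φ) := by
  ext x
  simp [vKron]

theorem vKron_comp_appendEquiv {N₁ N₂ : ℕ} (ψ : nQVec N₁) (φ : nQVec N₂) :
    vKron ψ φ ∘ Fin.appendEquiv N₁ N₂ = fun x => ψ x.1 * φ x.2 := by
  ext x
  simp [vKron]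

def pauliExpectation {N : ℕ} (a : Fin N → Fin 4) (ψ : nQVec N) : ℂ :=
  star ψ ⬝ᵥ PauliStr a *ᵥ ψ

theorem pauliExpectation_zero {N : ℕ} (ψ : nQVec N) : pauliExpectation 0 ψ = star ψ ⬝ᵥ ψ := by
  rw [pauliExpectation, pauliStr_zero, one_mulVec]

theorem pauliExpectation_append_vKron {N₁ N₂ : ℕ} (a₁ : Fin N₁ → Fin 4) (a₂ : Fin N₂ → Fin 4)
    (ψ : nQVec N₁) (φ : nQVec N₂) :
    pauliExpectation (Fin.append a₁ a₂) (vKron ψ φ)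
      = pauliExpectation a₁ ψ * pauliExpectation a₂ φ := by
  rw [pauliExpectation, ← comp_equiv_dotProduct_submatrix_mulVec (Fin.appendEquiv N₁ N₂),
    pauliStr_append_submatrix, star_vKron, vKron_comp_appendEquiv, vKron_comp_appendEquiv,
    dotProduct_kronecker_mulVec, pauliExpectation, pauliExpectation]

noncomputable def pauliMoment (n : ℝ) {N : ℕ} (ψ : nQVec N) : ℝ :=
  (1 / 2 ^ N : ℝ) * ∑ a : Fin N → Fin 4, ‖pauliExpectation a ψ‖ ^ (2 * n)

theorem sre_eq_log_pauliMoment (n : ℝ) {N : ℕ} (ψ : nQVec N) :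
    sre n ψ = (1 - n)⁻¹ * Real.log (pauliMoment n ψ) :=
  rfl

open scoped ComplexOrder in
theorem pauliMoment_pos (n : ℝ) {N : ℕ} {ψ : nQVec N} (hψ : ψ ≠ 0) : 0 < pauliMoment n ψ := by
  have hI : 0 < ‖pauliExpectation 0 ψ‖ ^ (2 * n) := by
    rw [pauliExpectation_zero]
    exact Real.rpow_pos_of_pos (norm_pos_iff.2 (mt dotProduct_star_self_eq_zero.1 hψ)) _
  exact mul_pos (by positivity) <|
    Finset.sum_pos' (fun a _ => Real.rpow_nonneg (norm_nonneg _) _) ⟨0, Finset.mem_univ _, hI⟩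

theorem pauliMoment_vKron (n : ℝ) {N₁ N₂ : ℕ} (ψ : nQVec N₁) (φ : nQVec N₂) :
    pauliMoment n (vKron ψ φ) = pauliMoment n ψ * pauliMoment n φ := by
  rw [pauliMoment, pauliMoment, pauliMoment, mul_mul_mul_comm, one_div_mul_one_div, ← pow_add,
    Finset.sum_mul_sum, ← (Fin.appendEquiv N₁ N₂).sum_comp, Fintype.sum_prod_type]
  refine congrArg _ (Finset.sum_congr rfl fun a₁ _ => Finset.sum_congr rfl fun a₂ _ => ?_)
  change ‖pauliExpectation (Fin.append a₁ a₂) (vKron ψ φ)‖ ^ (2 * n) = _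
  rw [pauliExpectation_append_vKron, norm_mul, Real.mul_rpow (norm_nonneg _) (norm_nonneg _)]

/-- The stabilizer Rényi entropy is additive under tensor products:
`M_n(ψ ⊗ φ) = M_n(ψ) + M_n(φ)` for normalized pure states `ψ, φ`. -/
theorem stmt_13 (n : ℝ) {N₁ N₂ : ℕ} (ψ : nQVec N₁) (φ : nQVec N₂)
    (hψ : ∑ x, Complex.normSq (ψ x) = 1) (hφ : ∑ x, Complex.normSq (φ x) = 1) :
    sre n (vKron ψ φ) = sre n ψ + sre n φ := by
  have hψ₀ : ψ ≠ 0 := by rintro rfl; simp at hψ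
  have hφ₀ : φ ≠ 0 := by rintro rfl; simp at hφ
  rw [sre_eq_log_pauliMoment, sre_eq_log_pauliMoment, sre_eq_log_pauliMoment, pauliMoment_vKron,
    Real.log_mul (pauliMoment_pos n hψ₀).ne' (pauliMoment_pos n hφ₀).ne', mul_add]
end
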